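/- Let w∈C⁴([0,1];ℂ) satisfy w(0)=w(1)=0, w'(0)=w'(1)=0 and the ODE (−d²/dz²+k²)²w = R·k²·θ on (0,1), with k>0, R>0 and θ∈L²(0,1). Then there is a universal constant C>0 with k²‖w''‖²_{L²(0,1)} + (1/k²)‖w''''‖²_{L²(0,1)} ≤ C·R²·k²·‖θ‖²_{L²(0,1)}. -/

import Mathlib

/-!
Pair the equation with `conj w` and integrate by parts three times; the clamped boundary
conditions kill every boundary term, so with `g = R k² θ`
`‖w''‖² + 2k²‖w'‖² + k⁴‖w‖² = Re ∫ conj w · g ≤ k⁴‖w‖²/2 + ‖g‖²/(2k⁴)` (Young).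
Hence `2k⁴‖w''‖² + k⁸‖w‖² ≤ ‖g‖²`. Solving the equation for `w''''` gives
`‖w''''‖² ≤ 3(‖g‖² + 4k⁴‖w''‖² + k⁸‖w‖²) ≤ 9‖g‖²`, so `k⁴‖w''‖² + ‖w''''‖² ≤ 10‖g‖²`;
dividing by `k²` yields the claim with `C = 10`.
-/

open intervalIntegral Real
open MeasureTheory (volume)
open Set
open scoped ComplexConjugate

theorem norm_add₃_sq_le {E : Type*} [SeminormedAddGroup E] (x y z : E) :
    ‖x + y + z‖ ^ 2 ≤ 3 * (‖x‖ ^ 2 + ‖y‖ ^ 2 + ‖z‖ ^ 2) := by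
  have h := norm_add₃_le (a := x) (b := y) (c := z)
  nlinarith [norm_nonneg (x + y + z), sq_nonneg (‖x‖ - ‖y‖), sq_nonneg (‖y‖ - ‖z‖),
    sq_nonneg (‖x‖ - ‖z‖)]

section

variable {𝕜 : Type*} [RCLike 𝕜]

theorem ContDiff.hasDerivAt_iteratedDeriv {n : WithTop ℕ∞} {f : ℝ → 𝕜} (hf : ContDiff ℝ n f)
    {m : ℕ} (hm : m < n) (x : ℝ) :
    HasDerivAt (iteratedDeriv m f) (iteratedDeriv (m + 1) f x) x := by
  rw [iteratedDeriv_succ]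
  exact (hf.differentiable_iteratedDeriv m hm x).hasDerivAt

theorem intervalIntegral.integral_conj_mul_self (f : ℝ → 𝕜) (a b : ℝ) :
    ∫ x in a..b, conj (f x) * f x = ((∫ x in a..b, ‖f x‖ ^ 2 : ℝ) : 𝕜) := by
  rw [← RCLike.intervalIntegral_ofReal]
  simp only [RCLike.conj_mul, RCLike.ofReal_pow]

theorem intervalIntegral.integral_conj_mul_deriv_eq_neg {u u' v v' : ℝ → 𝕜} {a b : ℝ}
    (hu : ∀ x ∈ uIcc a b, HasDerivAt u (u' x) x) (hv : ∀ x ∈ uIcc a b, HasDerivAt v (v' x) x)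
    (hu' : IntervalIntegrable u' volume a b) (hv' : IntervalIntegrable v' volume a b)
    (hua : u a = 0) (hub : u b = 0) :
    ∫ x in a..b, conj (u x) * v' x = -∫ x in a..b, conj (u' x) * v x := by
  have hcu' : IntervalIntegrable (fun x ↦ conj (u' x)) volume a b :=
    ⟨(RCLike.conjCLE (K := 𝕜)).toContinuousLinearMap.integrable_comp hu'.1,
      (RCLike.conjCLE (K := 𝕜)).toContinuousLinearMap.integrable_comp hu'.2⟩
  simpa [hua, hub] using integral_mul_deriv_eq_deriv_mul (u := fun x ↦ conj (u x))
    (fun x hx ↦ (hu x hx).star) hv hcu' hv'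

theorem intervalIntegral.integral_conj_mul_fourthOrder {w : ℝ → 𝕜} {a b : ℝ}
    (hw : ContDiff ℝ 4 w) (hwa : w a = 0) (hwb : w b = 0) (hw'a : deriv w a = 0)
    (hw'b : deriv w b = 0) (α β : 𝕜) :
    ∫ x in a..b, conj (w x) * (iteratedDeriv 4 w x - α * iteratedDeriv 2 w x + β * w x)
      = ((∫ x in a..b, ‖iteratedDeriv 2 w x‖ ^ 2 : ℝ) : 𝕜)
        + α * ((∫ x in a..b, ‖deriv w x‖ ^ 2 : ℝ) : 𝕜)
        + β * ((∫ x in a..b, ‖w x‖ ^ 2 : ℝ) : 𝕜) := by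
  have hC : ∀ m ≤ 4, Continuous (iteratedDeriv m w) := fun m hm ↦
    hw.continuous_iteratedDeriv m (by exact_mod_cast hm)
  have ibp : ∀ m n, m < 4 → n < 4 → iteratedDeriv m w a = 0 → iteratedDeriv m w b = 0 →
      ∫ x in a..b, conj (iteratedDeriv m w x) * iteratedDeriv (n + 1) w x
        = -∫ x in a..b, conj (iteratedDeriv (m + 1) w x) * iteratedDeriv n w x :=
    fun m n hm hn ha hb ↦ integral_conj_mul_deriv_eq_neg
      (fun x _ ↦ hw.hasDerivAt_iteratedDeriv (by exact_mod_cast hm) x)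
      (fun x _ ↦ hw.hasDerivAt_iteratedDeriv (by exact_mod_cast hn) x)
      ((hC _ hm).intervalIntegrable _ _) ((hC _ hn).intervalIntegrable _ _) ha hb
  have h4 := ibp 0 3 (by norm_num) (by norm_num) (by simpa using hwa) (by simpa using hwb)
  have h3 := ibp 1 2 (by norm_num) (by norm_num) (by simpa using hw'a) (by simpa using hw'b)
  have h2 := ibp 0 1 (by norm_num) (by norm_num) (by simpa using hwa) (by simpa using hwb)
  simp only [Nat.reduceAdd, iteratedDeriv_zero, iteratedDeriv_one] at h4 h3 h2
  have hw2 := hC 2 (by norm_num)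
  have hw4 := hC 4 le_rfl
  have hcw : Continuous fun x ↦ conj (w x) := RCLike.continuous_conj.comp hw.continuous
  simp only [mul_sub, mul_add, mul_left_comm _ α, mul_left_comm _ β]
  rw [integral_add, integral_sub, integral_const_mul, integral_const_mul, h4, h3, h2,
    integral_conj_mul_self, integral_conj_mul_self, integral_conj_mul_self]
  · ring
  all_goals exact Continuous.intervalIntegrable (by fun_prop) _ _

theorem two_mul_re_conj_mul_le (c : ℝ) (z u : 𝕜) :
    2 * c * RCLike.re (conj z * u) ≤ c ^ 2 * ‖z‖ ^ 2 + ‖u‖ ^ 2 := by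
  have hre : |RCLike.re (conj z * u)| ≤ ‖z‖ * ‖u‖ := by
    simpa using RCLike.abs_re_le_norm (conj z * u)
  calc 2 * c * RCLike.re (conj z * u) ≤ 2 * (|c| * ‖z‖) * ‖u‖ := by
        nlinarith [abs_mul c (RCLike.re (conj z * u)), le_abs_self (c * RCLike.re (conj z * u)),
          abs_nonneg c]
    _ ≤ (|c| * ‖z‖) ^ 2 + ‖u‖ ^ 2 := two_mul_le_add_sq _ _
    _ = c ^ 2 * ‖z‖ ^ 2 + ‖u‖ ^ 2 := by rw [mul_pow, sq_abs]

variable {w g : ℝ → 𝕜} {a b k : ℝ}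

theorem fourthOrder_energy_le (hab : a ≤ b) (hw : ContDiff ℝ 4 w) (hwa : w a = 0) (hwb : w b = 0)
    (hw'a : deriv w a = 0) (hw'b : deriv w b = 0)
    (hg : IntervalIntegrable (fun x ↦ ‖g x‖ ^ 2) volume a b)
    (heq : ∀ x ∈ Ioo a b,
      iteratedDeriv 4 w x - 2 * (k : 𝕜) ^ 2 * iteratedDeriv 2 w x + (k : 𝕜) ^ 4 * w x = g x) :
    2 * k ^ 4 * ((∫ x in a..b, ‖iteratedDeriv 2 w x‖ ^ 2)
        + 2 * k ^ 2 * ∫ x in a..b, ‖deriv w x‖ ^ 2) + k ^ 8 * (∫ x in a..b, ‖w x‖ ^ 2)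
      ≤ ∫ x in a..b, ‖g x‖ ^ 2 := by
  have hL : Continuous fun x ↦ conj (w x) *
      (iteratedDeriv 4 w x - 2 * (k : 𝕜) ^ 2 * iteratedDeriv 2 w x + (k : 𝕜) ^ 4 * w x) := by
    have := hw.continuous_iteratedDeriv 2 (by norm_num)
    have := hw.continuous_iteratedDeriv 4 le_rfl
    have : Continuous fun x ↦ conj (w x) := RCLike.continuous_conj.comp hw.continuous
    fun_prop
  have hw2 : Continuous fun x ↦ ‖w x‖ ^ 2 := by have := hw.continuous; fun_prop
  have henergy : ∫ x in a..b, RCLike.re (conj (w x) *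
      (iteratedDeriv 4 w x - 2 * (k : 𝕜) ^ 2 * iteratedDeriv 2 w x + (k : 𝕜) ^ 4 * w x))
      = (∫ x in a..b, ‖iteratedDeriv 2 w x‖ ^ 2) + 2 * k ^ 2 * (∫ x in a..b, ‖deriv w x‖ ^ 2)
        + k ^ 4 * ∫ x in a..b, ‖w x‖ ^ 2 := by
    rw [intervalIntegral_re (hL.intervalIntegrable _ _),
      integral_conj_mul_fourthOrder hw hwa hwb hw'a hw'b]
    simp
  have hmono : ∫ x in a..b, 2 * k ^ 4 * RCLike.re (conj (w x) *
      (iteratedDeriv 4 w x - 2 * (k : 𝕜) ^ 2 * iteratedDeriv 2 w x + (k : 𝕜) ^ 4 * w x))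
      ≤ ∫ x in a..b, (k ^ 4) ^ 2 * ‖w x‖ ^ 2 + ‖g x‖ ^ 2 :=
    integral_mono_on_of_le_Ioo hab
      ((RCLike.continuous_re.comp hL).intervalIntegrable _ _ |>.const_mul _)
      (((hw2.intervalIntegrable _ _).const_mul _).add hg)
      fun x hx ↦ by simpa only [heq x hx] using two_mul_re_conj_mul_le (k ^ 4) (w x) (g x)
  rw [integral_const_mul, integral_add ((hw2.intervalIntegrable _ _).const_mul _) hg,
    integral_const_mul, henergy] at hmono
  linarith

theorem integral_norm_iteratedDeriv_four_sq_le (hab : a ≤ b) (hw : ContDiff ℝ 4 w)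
    (hg : IntervalIntegrable (fun x ↦ ‖g x‖ ^ 2) volume a b)
    (heq : ∀ x ∈ Ioo a b,
      iteratedDeriv 4 w x - 2 * (k : 𝕜) ^ 2 * iteratedDeriv 2 w x + (k : 𝕜) ^ 4 * w x = g x) :
    ∫ x in a..b, ‖iteratedDeriv 4 w x‖ ^ 2 ≤ 3 * ((∫ x in a..b, ‖g x‖ ^ 2)
      + 4 * k ^ 4 * (∫ x in a..b, ‖iteratedDeriv 2 w x‖ ^ 2) + k ^ 8 * ∫ x in a..b, ‖w x‖ ^ 2) := by
  have hw4 : Continuous fun x ↦ ‖iteratedDeriv 4 w x‖ ^ 2 := by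
    have := hw.continuous_iteratedDeriv 4 le_rfl; fun_prop
  have hw2 : Continuous fun x ↦ ‖iteratedDeriv 2 w x‖ ^ 2 := by
    have := hw.continuous_iteratedDeriv 2 (by norm_num); fun_prop
  have hw0 : Continuous fun x ↦ ‖w x‖ ^ 2 := by have := hw.continuous; fun_prop
  have hi2 := (hw2.intervalIntegrable (μ := volume) a b).const_mul (4 * k ^ 4)
  have hi0 := (hw0.intervalIntegrable (μ := volume) a b).const_mul (k ^ 8)
  have hmono : ∫ x in a..b, ‖iteratedDeriv 4 w x‖ ^ 2 ≤ ∫ x in a..b, 3 * (‖g x‖ ^ 2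
      + 4 * k ^ 4 * ‖iteratedDeriv 2 w x‖ ^ 2 + k ^ 8 * ‖w x‖ ^ 2) := by
    refine integral_mono_on_of_le_Ioo hab (hw4.intervalIntegrable _ _)
      (((hg.add hi2).add hi0).const_mul 3) fun x hx ↦ ?_
    have hsolve : iteratedDeriv 4 w x
        = g x + 2 * (k : 𝕜) ^ 2 * iteratedDeriv 2 w x + -((k : 𝕜) ^ 4 * w x) := by
      rw [← heq x hx]; ring
    rw [hsolve]
    refine (norm_add₃_sq_le _ _ _).trans_eq ?_
    simp only [norm_neg, norm_mul, ← RCLike.ofReal_pow, RCLike.norm_ofReal, RCLike.norm_ofNat,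
      mul_pow, sq_abs]
    ring
  rwa [integral_const_mul, integral_add (hg.add hi2) hi0, integral_add hg hi2,
    integral_const_mul, integral_const_mul] at hmono

theorem fourthOrder_estimate (hab : a ≤ b) (hw : ContDiff ℝ 4 w) (hwa : w a = 0) (hwb : w b = 0)
    (hw'a : deriv w a = 0) (hw'b : deriv w b = 0)
    (hg : IntervalIntegrable (fun x ↦ ‖g x‖ ^ 2) volume a b)
    (heq : ∀ x ∈ Ioo a b,
      iteratedDeriv 4 w x - 2 * (k : 𝕜) ^ 2 * iteratedDeriv 2 w x + (k : 𝕜) ^ 4 * w x = g x) :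
    k ^ 4 * (∫ x in a..b, ‖iteratedDeriv 2 w x‖ ^ 2) + ∫ x in a..b, ‖iteratedDeriv 4 w x‖ ^ 2
      ≤ 10 * ∫ x in a..b, ‖g x‖ ^ 2 := by
  have henergy := fourthOrder_energy_le hab hw hwa hwb hw'a hw'b hg heq
  have hfourth := integral_norm_iteratedDeriv_four_sq_le hab hw hg heq
  have hnonneg : ∀ f : ℝ → 𝕜, 0 ≤ ∫ x in a..b, ‖f x‖ ^ 2 := fun f ↦
    integral_nonneg hab fun _ _ ↦ sq_nonneg _
  have hk4 : 0 ≤ k ^ 4 := by positivity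
  have hk6 : 0 ≤ k ^ 6 := by positivity
  have hk8 : 0 ≤ k ^ 8 := by positivity
  linarith [mul_nonneg hk6 (hnonneg (deriv w)), mul_nonneg hk8 (hnonneg w),
    mul_nonneg hk4 (hnonneg (iteratedDeriv 2 w)), hnonneg g]

end

/-- Coercivity estimate for the fourth-order Fourier-mode Stokes problem
`(−d²/dz²+k²)² w = R k² θ` with clamped boundary conditions. -/
theorem stmt8 :
    ∃ C : ℝ, 0 < C ∧
      ∀ (k R : ℝ), 0 < k → 0 < R → ∀ (w θ : ℝ → ℂ), ContDiff ℝ 4 w →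
        w 0 = 0 → w 1 = 0 → deriv w 0 = 0 → deriv w 1 = 0 →
        (∀ z ∈ Set.Ioo (0:ℝ) 1,
          iteratedDeriv 4 w z - 2 * (k:ℂ) ^ 2 * iteratedDeriv 2 w z + (k:ℂ) ^ 4 * w z
            = (R:ℂ) * (k:ℂ) ^ 2 * θ z) →
        IntervalIntegrable (fun z => ‖θ z‖ ^ 2) MeasureTheory.volume 0 1 →
        k ^ 2 * (∫ z in (0:ℝ)..1, ‖iteratedDeriv 2 w z‖ ^ 2)
          + (1 / k ^ 2) * (∫ z in (0:ℝ)..1, ‖iteratedDeriv 4 w z‖ ^ 2)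
        ≤ C * R ^ 2 * k ^ 2 * (∫ z in (0:ℝ)..1, ‖θ z‖ ^ 2) := by
  refine ⟨10, by norm_num, fun k R hk _ w θ hw hw0 hw1 hw'0 hw'1 hode hθ ↦ ?_⟩
  have hnorm : (fun z ↦ ‖(R : ℂ) * (k : ℂ) ^ 2 * θ z‖ ^ 2)
      = fun z ↦ R ^ 2 * k ^ 4 * ‖θ z‖ ^ 2 := by
    ext z
    simp only [norm_mul, ← Complex.ofReal_pow, Complex.norm_real, norm_eq_abs, mul_pow, sq_abs]
    ring
  have hest := fourthOrder_estimate zero_le_one hw hw0 hw1 hw'0 hw'1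
    (hnorm ▸ hθ.const_mul (R ^ 2 * k ^ 4)) hode
  rw [hnorm, integral_const_mul] at hest
  calc k ^ 2 * (∫ z in (0:ℝ)..1, ‖iteratedDeriv 2 w z‖ ^ 2)
        + (1 / k ^ 2) * (∫ z in (0:ℝ)..1, ‖iteratedDeriv 4 w z‖ ^ 2)
      = (k ^ 4 * (∫ z in (0:ℝ)..1, ‖iteratedDeriv 2 w z‖ ^ 2)
        + ∫ z in (0:ℝ)..1, ‖iteratedDeriv 4 w z‖ ^ 2) / k ^ 2 := by field_simp
    _ ≤ 10 * (R ^ 2 * k ^ 4 * ∫ z in (0:ℝ)..1, ‖θ z‖ ^ 2) / k ^ 2 := by gcongr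
    _ = 10 * R ^ 2 * k ^ 2 * ∫ z in (0:ℝ)..1, ‖θ z‖ ^ 2 := by field_simp
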